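/- Consequently, under the LR-ADI relations, the block Krylov subspace inclusion K_p(A, W_j) ⊆ K_p(A, B) + range(Z_j) holds for all p ≥ 1. -/

import Mathlib

/-! Induction on `p`, peeling off the leading block: an element of `K_{p+1}(A, W)` is
`W Ξ₀ + A X'` with `X' ∈ K_p(A, W)`. If `X' = Y + Z C` with `Y ∈ K_p(A, B)`, then the two
relations give `W Ξ₀ + A X' = (B (Ξ₀ + Gᵀ C) + A Y) + Z (G Ξ₀ + S C)`, and the first summand
lies in `K_{p+1}(A, B)`. -/

open Matrix

/-- The block Krylov subspace of order `p` (with block coefficients). -/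
def blockKrylov {n s : ℕ} (p : ℕ) (A : Matrix (Fin n) (Fin n) ℝ)
    (W : Matrix (Fin n) (Fin s) ℝ) : Set (Matrix (Fin n) (Fin s) ℝ) :=
  { X | ∃ Ξ : Fin p → Matrix (Fin s) (Fin s) ℝ, X = ∑ i : Fin p, A ^ (i : ℕ) * W * Ξ i }

section BlockKrylov

variable {n s : ℕ} (A : Matrix (Fin n) (Fin n) ℝ) (W : Matrix (Fin n) (Fin s) ℝ)

theorem blockKrylov_zero : blockKrylov 0 A W = {0} := by
  simp [blockKrylov]

theorem sum_pow_mul_mul_fin_succ {p : ℕ} (Ξ : Fin (p + 1) → Matrix (Fin s) (Fin s) ℝ) :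
    ∑ i : Fin (p + 1), A ^ (i : ℕ) * W * Ξ i
      = W * Ξ 0 + A * ∑ i : Fin p, A ^ (i : ℕ) * W * Ξ i.succ := by
  simp only [Fin.sum_univ_succ, Matrix.mul_sum, Fin.val_zero, pow_zero, Matrix.one_mul,
    Fin.val_succ, pow_succ', Matrix.mul_assoc]

theorem mem_blockKrylov_succ {p : ℕ} {X : Matrix (Fin n) (Fin s) ℝ} :
    X ∈ blockKrylov (p + 1) A W ↔
      ∃ Ξ₀ : Matrix (Fin s) (Fin s) ℝ, ∃ Y ∈ blockKrylov p A W, X = W * Ξ₀ + A * Y := by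
  constructor
  · rintro ⟨Ξ, rfl⟩
    exact ⟨Ξ 0, _, ⟨fun i => Ξ i.succ, rfl⟩, sum_pow_mul_mul_fin_succ A W Ξ⟩
  · rintro ⟨Ξ₀, _, ⟨Ξ, rfl⟩, rfl⟩
    refine ⟨Fin.cons Ξ₀ Ξ, ?_⟩
    rw [sum_pow_mul_mul_fin_succ]
    simp only [Fin.cons_zero, Fin.cons_succ]

end BlockKrylov

theorem exists_mem_blockKrylov_add_mul {n s js : ℕ} {A : Matrix (Fin n) (Fin n) ℝ}
    {B W : Matrix (Fin n) (Fin s) ℝ} {Z : Matrix (Fin n) (Fin js) ℝ}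
    {G : Matrix (Fin js) (Fin s) ℝ} {S : Matrix (Fin js) (Fin js) ℝ}
    (hW : W = B + Z * G) (hAZ : A * Z = Z * S + B * Gᵀ) (p : ℕ) :
    ∀ X ∈ blockKrylov p A W, ∃ Y ∈ blockKrylov p A B, ∃ C : Matrix (Fin js) (Fin s) ℝ, X = Y + Z * C := by
  induction p with
  | zero =>
    intro X hX
    rw [blockKrylov_zero, Set.mem_singleton_iff] at hX
    exact ⟨0, by rw [blockKrylov_zero]; rfl, 0, by rw [hX, Matrix.mul_zero, add_zero]⟩
  | succ p ih =>
    intro X hX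
    obtain ⟨Ξ₀, X', hX', rfl⟩ := (mem_blockKrylov_succ A W).1 hX
    obtain ⟨Y, hY, C, rfl⟩ := ih X' hX'
    refine ⟨B * (Ξ₀ + Gᵀ * C) + A * Y, (mem_blockKrylov_succ A B).2 ⟨_, Y, hY, rfl⟩,
      G * Ξ₀ + S * C, ?_⟩
    calc W * Ξ₀ + A * (Y + Z * C)
        = B * Ξ₀ + Z * G * Ξ₀ + (A * Y + A * Z * C) := by
          rw [hW, Matrix.add_mul, Matrix.mul_add, Matrix.mul_assoc A]
      _ = B * (Ξ₀ + Gᵀ * C) + A * Y + Z * (G * Ξ₀ + S * C) := by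
          rw [hAZ]
          simp only [Matrix.mul_add, Matrix.add_mul, Matrix.mul_assoc]
          abel

theorem blockKrylov_resfactor_subset {n s js : ℕ} (A : Matrix (Fin n) (Fin n) ℝ)
    (B : Matrix (Fin n) (Fin s) ℝ) (W : Matrix (Fin n) (Fin s) ℝ)
    (Z : Matrix (Fin n) (Fin js) ℝ) (G : Matrix (Fin js) (Fin s) ℝ)
    (S : Matrix (Fin js) (Fin js) ℝ)
    (hW : W = B + Z * G) (hAZ : A * Z = Z * S + B * Gᵀ) :
    ∀ p : ℕ, 1 ≤ p → ∀ X ∈ blockKrylov p A W,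
      ∃ Y ∈ blockKrylov p A B, ∃ C : Matrix (Fin js) (Fin s) ℝ, X = Y + Z * C :=
  fun p _ => exists_mem_blockKrylov_add_mul hW hAZ p
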